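/- arXiv:1903.03535 — 4 statements merged into one kernel-verified Lean document; each statement's English description precedes it below -/
import Mathlib

section
/- A cyclic code C ⊆ (F_{q^r})^n is Galois supplemented if and only if C + (F_q)^n = (F_{q^r})^n, where (F_q)^n is the set of vectors all of whose coordinates lie in the subfield F_q. -/
open Polynomial

/-- The polynomial of degree `< n` whose coefficient vector is the word `u`. -/
noncomputable def wordPoly {F : Type*} [Field F] {n : ℕ} (u : Fin n → F) : Polynomial F :=
  ∑ j : Fin n, Polynomial.C (u j) * Polynomial.X ^ (j : ℕ)

/-- `C ⊆ (F_{q^r})^n` is Galois supplemented: `C + C^τ = (F_{q^r})^n` for every non-trivial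
`τ ∈ Gal(F_{q^r}/F_q)`; the non-trivial automorphisms are `x ↦ x^(q^i)`, `1 ≤ i < r`. -/
def GaloisSupplemented {F : Type*} [Field F] {n : ℕ} (q r : ℕ) (C : Set (Fin n → F)) : Prop :=
  ∀ i : ℕ, 0 < i → i < r → ∀ v : Fin n → F,
    ∃ a ∈ C, ∃ b ∈ C, v = a + fun j => (b j) ^ (q ^ i)

/-! Let `σ` be the Frobenius `x ↦ x ^ q` of `F = 𝔽_{q^r}`. Since `X ^ n - 1` is `σ`-fixed and
divisible by `g` and all its conjugates `g^{σ^i}`, reducing modulo `X ^ n - 1` turns both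
conditions into statements about all polynomials. By Bézout, `C + C^{σ^i}` is everything iff
`g` and `g^{σ^i}` are coprime. If `g` is coprime to all its nontrivial conjugates, a trace
argument writes every polynomial as a multiple of `g` plus a `σ`-fixed polynomial. Conversely,
if `g` and `g^{σ^i}` had a common root `α`, writing a constant `c` as a multiple of `g` plus a
`σ`-fixed polynomial `b` and evaluating at `α` before and after applying `σ^i` gives
`σ^i c = b(α) = c` for every `c ∈ F`, which fails for `0 < i < r`. -/

section PolynomialMap

variable {R : Type*} [CommRing R]

lemma degree_modByMonic_X_pow_sub_one_lt [Nontrivial R] {n : ℕ} (hn : 0 < n) (p : R[X]) :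
    (p %ₘ (X ^ n - 1)).degree < n := by
  have hdeg : (X ^ n - 1 : R[X]).degree = n := by simpa using degree_X_pow_sub_C (R := R) hn 1
  exact hdeg ▸ degree_modByMonic_lt p (leadingCoeff_X_pow_sub_one hn)

lemma map_map_pow (σ : R →+* R) (p : R[X]) (i j : ℕ) :
    (p.map (σ ^ i)).map (σ ^ j) = p.map (σ ^ (j + i)) := by
  rw [Polynomial.map_map, ← RingHom.mul_def, ← pow_add]

lemma map_map_pow_one (σ : R →+* R) (p : R[X]) (i : ℕ) :
    (p.map (σ ^ i)).map σ = p.map (σ ^ (i + 1)) := by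
  simpa [add_comm] using map_map_pow σ p i 1

lemma map_pow_eq_self {σ : R →+* R} {p : R[X]} (hp : p.map σ = p) (i : ℕ) :
    p.map (σ ^ i) = p := by
  induction i with
  | zero => rw [pow_zero, RingHom.one_def, Polynomial.map_id]
  | succ i ih => rw [pow_succ, RingHom.mul_def, ← Polynomial.map_map, hp, ih]

lemma pow_apply_eq_pow {σ : R →+* R} {q : ℕ} (hσ : ∀ x, σ x = x ^ q) (i : ℕ) (x : R) :
    (σ ^ i) x = x ^ q ^ i := by
  induction i with
  | zero => simp
  | succ i ih => rw [pow_succ', RingHom.mul_def, RingHom.comp_apply, ih, hσ, ← pow_mul, ← pow_succ]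

/-- `g` is coprime to the product `H` of its conjugates; writing `1 = s g + t H`, the trace
`∑ i < r, σ^i (v t H)` is `σ`-fixed and congruent to `v` modulo `g`. -/
lemma exists_map_eq_self_dvd_sub {σ : R →+* R} {r : ℕ} (hr : 0 < r) (hσ : σ ^ r = 1) {g : R[X]}
    (hg : ∀ i, 0 < i → i < r → IsCoprime g (g.map (σ ^ i))) (v : R[X]) :
    ∃ b : R[X], b.map σ = b ∧ g ∣ v - b := by
  set H := ∏ i ∈ Finset.Ioo 0 r, g.map (σ ^ i)
  obtain ⟨s, t, hst⟩ : IsCoprime g H := IsCoprime.prod_right fun i hi =>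
    hg i (Finset.mem_Ioo.mp hi).1 (Finset.mem_Ioo.mp hi).2
  set c := v * t * H
  refine ⟨∑ i ∈ Finset.range r, c.map (σ ^ i), ?_, ?_⟩
  · rw [Polynomial.map_sum]
    simp_rw [map_map_pow_one]
    have hshift := Finset.sum_range_succ' (fun i => c.map (σ ^ i)) r
    have hcycle : c.map (σ ^ r) = c.map (σ ^ 0) := by rw [hσ, pow_zero]
    rw [Finset.sum_range_succ, hcycle] at hshift
    linear_combination -hshift
  · have hconj : ∀ i ∈ Finset.Ioo 0 r, g ∣ c.map (σ ^ i) := fun i hi => by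
      obtain ⟨hi0, hir⟩ := Finset.mem_Ioo.mp hi
      have hgH : g.map (σ ^ (r - i)) ∣ H :=
        Finset.dvd_prod_of_mem _ (Finset.mem_Ioo.mpr ⟨by omega, by omega⟩)
      calc g = (g.map (σ ^ (r - i))).map (σ ^ i) := by
            rw [map_map_pow, Nat.add_sub_cancel' hir.le, hσ, RingHom.one_def, Polynomial.map_id]
        _ ∣ c.map (σ ^ i) := Polynomial.map_dvd _ (hgH.trans (dvd_mul_left H _))
    have hsplit : v - ∑ i ∈ Finset.range r, c.map (σ ^ i)
        = v * s * g - ∑ i ∈ Finset.Ioo 0 r, c.map (σ ^ i) := by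
      rw [Finset.range_eq_Ico, Finset.sum_eq_sum_Ico_succ_bot hr, Finset.Ico_add_one_left_eq_Ioo,
        pow_zero, RingHom.one_def, Polynomial.map_id]
      linear_combination -v * hst
    rw [hsplit]
    exact dvd_sub (dvd_mul_left g _) (Finset.dvd_sum hconj)

end PolynomialMap

section Words

variable {F : Type*} [Field F] {n : ℕ}

def cyclicCode (n : ℕ) (g : F[X]) : Set (Fin n → F) := {u | g ∣ wordPoly u}

lemma coeff_wordPoly (u : Fin n → F) (m : ℕ) :
    (wordPoly u).coeff m = if h : m < n then u ⟨m, h⟩ else 0 := by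
  simp only [wordPoly, finsetSum_coeff, coeff_C_mul, coeff_X_pow, mul_ite, mul_one, mul_zero]
  split_ifs with h
  · rw [Finset.sum_eq_single (⟨m, h⟩ : Fin n)] <;> simp +contextual [Fin.ext_iff, eq_comm]
  · exact Finset.sum_eq_zero fun j _ => if_neg fun (hj : m = j) => h (hj ▸ j.isLt)

lemma wordPoly_add (u v : Fin n → F) : wordPoly (u + v) = wordPoly u + wordPoly v := by
  simp [wordPoly, add_mul, Finset.sum_add_distrib]

lemma map_wordPoly (τ : F →+* F) (u : Fin n → F) :
    (wordPoly u).map τ = wordPoly fun j => τ (u j) := by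
  simp [wordPoly, Polynomial.map_sum]

lemma wordPoly_coeff {p : F[X]} (hp : p.degree < n) :
    wordPoly (fun j : Fin n => p.coeff j) = p := by
  ext m
  rw [coeff_wordPoly]
  split_ifs with hm
  · rfl
  · exact (coeff_eq_zero_of_degree_lt (hp.trans_le (by exact_mod_cast not_lt.mp hm))).symm

lemma exists_mem_cyclicCode_eq_add {g B : F[X]} (hB : B.degree < n) (v : Fin n → F)
    (h : g ∣ wordPoly v - B) : ∃ a ∈ cyclicCode n g, v = a + fun j : Fin n => B.coeff j := by
  refine ⟨v - fun j : Fin n => B.coeff j, ?_, (sub_add_cancel _ _).symm⟩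
  have hv := wordPoly_add (v - fun j : Fin n => B.coeff j) fun j => B.coeff j
  rw [sub_add_cancel, wordPoly_coeff hB] at hv
  rwa [cyclicCode, Set.mem_ofPred_eq, eq_sub_of_add_eq hv.symm]

end Words

section CyclicCode

variable {F : Type*} [Field F] {n : ℕ} {g : F[X]}

lemma forall_eq_add_map_iff_isCoprime (hn : 0 < n) (hg : g ∣ X ^ n - 1) {τ : F →+* F}
    (hτ : Function.Surjective τ) :
    (∀ v : Fin n → F, ∃ a ∈ cyclicCode n g, ∃ b ∈ cyclicCode n g, v = a + fun j => τ (b j)) ↔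
      IsCoprime g (g.map τ) := by
  constructor
  · intro h
    obtain ⟨a, ⟨s, hs⟩, b, ⟨t, ht⟩, hab⟩ := h fun j => (1 : F[X]).coeff j
    have h1 := congrArg wordPoly hab
    rw [wordPoly_coeff (by rw [degree_one]; exact_mod_cast hn), wordPoly_add, ← map_wordPoly, ht,
      hs, Polynomial.map_mul] at h1
    exact ⟨s, t.map τ, by linear_combination -h1⟩
  · rintro ⟨s, t, hst⟩ v
    set P := wordPoly v * t * g.map τ
    have hgτ : g.map τ ∣ X ^ n - 1 := by simpa using Polynomial.map_dvd τ hg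
    obtain ⟨b, hb⟩ := Polynomial.map_surjective τ hτ (P %ₘ (X ^ n - 1))
    have hbdeg : b.degree < n := by
      rw [← degree_map_eq_of_injective τ.injective, hb]
      exact degree_modByMonic_X_pow_sub_one_lt hn P
    have hgb : g ∣ b := by
      rw [← map_dvd_map' τ, hb]
      exact (dvd_iff_dvd_of_dvd_sub (hgτ.trans (dvd_modByMonic_sub P _))).mpr (dvd_mul_left _ _)
    have hvb : g ∣ wordPoly v - b.map τ := by
      rw [hb, show wordPoly v - P %ₘ (X ^ n - 1) = wordPoly v * s * g - (P %ₘ (X ^ n - 1) - P) by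
        linear_combination -wordPoly v * hst]
      exact dvd_sub (dvd_mul_left g _) (hg.trans (dvd_modByMonic_sub P _))
    obtain ⟨a, ha, hva⟩ := exists_mem_cyclicCode_eq_add (degree_map_le.trans_lt hbdeg) v hvb
    refine ⟨a, ha, fun j => b.coeff j, ?_, by simpa only [coeff_map] using hva⟩
    rwa [cyclicCode, Set.mem_ofPred_eq, wordPoly_coeff hbdeg]

lemma exists_mem_cyclicCode_eq_add_fixed (hn : 0 < n) (hg : g ∣ X ^ n - 1) {σ : F →+* F} {r : ℕ}
    (hr : 0 < r) (hσ : σ ^ r = 1) (hcop : ∀ i, 0 < i → i < r → IsCoprime g (g.map (σ ^ i)))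
    (v : Fin n → F) :
    ∃ a ∈ cyclicCode n g, ∃ b : Fin n → F, (∀ j, σ (b j) = b j) ∧ v = a + b := by
  obtain ⟨b, hbσ, hvb⟩ := exists_map_eq_self_dvd_sub hr hσ hcop (wordPoly v)
  have hBσ : (b %ₘ (X ^ n - 1)).map σ = b %ₘ (X ^ n - 1) := by
    rw [map_modByMonic σ (leadingCoeff_X_pow_sub_one hn), hbσ]
    simp
  have hvB : g ∣ wordPoly v - b %ₘ (X ^ n - 1) := by
    simpa using dvd_sub hvb (hg.trans (dvd_modByMonic_sub b _))
  obtain ⟨a, ha, hva⟩ :=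
    exists_mem_cyclicCode_eq_add (degree_modByMonic_X_pow_sub_one_lt hn b) v hvB
  exact ⟨a, ha, _, fun j => by rw [← coeff_map, hBσ], hva⟩

lemma isCoprime_map_pow_of_forall_eq_add_fixed (hn : 0 < n) {σ : F →+* F} {i : ℕ}
    (hσi : ∃ c, (σ ^ i) c ≠ c)
    (h : ∀ v : Fin n → F, ∃ a ∈ cyclicCode n g, ∃ b : Fin n → F, (∀ j, σ (b j) = b j) ∧ v = a + b) :
    IsCoprime g (g.map (σ ^ i)) := by
  rw [isCoprime_iff_aeval_ne_zero_of_isAlgClosed F (AlgebraicClosure F)]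
  intro α
  by_contra! hα
  obtain ⟨c, hc⟩ := hσi
  obtain ⟨a, ha, b, hb, hab⟩ := h fun j => (C c).coeff j
  have hsum : C c = wordPoly a + wordPoly b := by
    rw [← wordPoly_add, ← hab, wordPoly_coeff (degree_C_le.trans_lt (by exact_mod_cast hn))]
  have hbσ : (wordPoly b).map (σ ^ i) = wordPoly b :=
    map_pow_eq_self (by simp only [map_wordPoly, hb]) i
  have hsumσ : C ((σ ^ i) c) = (wordPoly a).map (σ ^ i) + wordPoly b := by
    rw [← hbσ, ← Polynomial.map_add, ← hsum, map_C]
  have hαa : aeval α (wordPoly a) = 0 := aeval_eq_zero_of_dvd_aeval_eq_zero ha hα.1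
  have hαaσ : aeval α ((wordPoly a).map (σ ^ i)) = 0 :=
    aeval_eq_zero_of_dvd_aeval_eq_zero (Polynomial.map_dvd _ ha) hα.2
  apply hc
  apply (algebraMap F (AlgebraicClosure F)).injective
  rw [← aeval_C α, ← aeval_C α, hsum, hsumσ, map_add, map_add, hαa, hαaσ]

end CyclicCode

section FiniteField

variable {F : Type*} [Field F] [Fintype F]

lemma exists_ringHom_apply_eq_pow {q r : ℕ} (hq : IsPrimePow q) (hF : Fintype.card F = q ^ r) :
    ∃ σ : F →+* F, ∀ x, σ x = x ^ q := by
  obtain ⟨p, k, hp, -, rfl⟩ := hq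
  have : Fact p.Prime := ⟨hp.nat_prime⟩
  have : CharP F p := charP_of_card_eq_prime_pow (f := k * r) (by rw [hF, pow_mul])
  exact ⟨iterateFrobenius F p k, iterateFrobenius_def p k⟩

lemma card_le_of_forall_pow_eq_self {m : ℕ} (hm : 1 < m) (h : ∀ x : F, x ^ m = x) :
    Fintype.card F ≤ m := by
  rw [← FiniteField.X_pow_card_sub_X_natDegree_eq F hm, ← Finset.card_univ]
  exact card_le_degree_of_subset_roots fun x _ =>
    (mem_roots (FiniteField.X_pow_card_sub_X_ne_zero F hm)).mpr (by simp [h])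

lemma exists_pow_pow_ne_self {q r i : ℕ} (hq : 1 < q) (hF : Fintype.card F = q ^ r) (hi : 0 < i)
    (hir : i < r) : ∃ c : F, c ^ q ^ i ≠ c := by
  by_contra! h
  have hcard := card_le_of_forall_pow_eq_self (Nat.one_lt_pow hi.ne' hq) h
  exact (Nat.pow_lt_pow_right hq hir).not_ge (hF ▸ hcard)

end FiniteField

theorem stmt3_general (q r n : ℕ) (hq : IsPrimePow q) (hr : 1 < r) (hn : 0 < n)
    (F : Type*) [Field F] [Fintype F] (hF : Fintype.card F = q ^ r)
    (g : Polynomial F) (hdvd : g ∣ (Polynomial.X ^ n - 1)) :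
    GaloisSupplemented q r {u : Fin n → F | g ∣ wordPoly u} ↔
      ∀ v : Fin n → F, ∃ a : Fin n → F, g ∣ wordPoly a ∧
        ∃ b : Fin n → F, (∀ j, (b j) ^ q = b j) ∧ v = a + b := by
  obtain ⟨σ, hσ⟩ := exists_ringHom_apply_eq_pow hq hF
  have hσr : σ ^ r = 1 := RingHom.ext fun x => by
    rw [pow_apply_eq_pow hσ, ← hF, FiniteField.pow_card]; rfl
  have hσi (i : ℕ) (hi : 0 < i) (hir : i < r) : ∃ c, (σ ^ i) c ≠ c := by
    simpa only [pow_apply_eq_pow hσ] using exists_pow_pow_ne_self hq.one_lt hF hi hir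
  have hGS : GaloisSupplemented q r (cyclicCode n g) ↔
      ∀ i, 0 < i → i < r → IsCoprime g (g.map (σ ^ i)) := by
    refine forall₃_congr fun i _ _ => ?_
    simp only [← pow_apply_eq_pow hσ]
    exact forall_eq_add_map_iff_isCoprime hn hdvd (Finite.surjective_of_injective (σ ^ i).injective)
  simp only [← hσ]
  change GaloisSupplemented q r (cyclicCode n g) ↔
    ∀ v, ∃ a ∈ cyclicCode n g, ∃ b : Fin n → F, (∀ j, σ (b j) = b j) ∧ v = a + b
  rw [hGS]
  exact ⟨fun h => exists_mem_cyclicCode_eq_add_fixed hn hdvd (by omega) hσr h,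
    fun h i hi hir => isCoprime_map_pow_of_forall_eq_add_fixed hn (hσi i hi hir) h⟩

/-- a cyclic code `C ⊆ (F_{q^r})^n` is Galois supplemented if and only if
`C + (F_q)^n = (F_{q^r})^n`, where `(F_q)^n` is the set of words all of whose coordinates
lie in the subfield `F_q = {x | x^q = x}`. -/
theorem stmt3 (q r n : ℕ) (hq : IsPrimePow q) (hr : 1 < r) (hn : 0 < n)
    (hcop : Nat.Coprime n q)
    (F : Type*) [Field F] [Fintype F] (hF : Fintype.card F = q ^ r)
    (g : Polynomial F) (hmonic : g.Monic) (hdvd : g ∣ (Polynomial.X ^ n - 1)) :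
    GaloisSupplemented q r {u : Fin n → F | g ∣ wordPoly u} ↔
      ∀ v : Fin n → F, ∃ a : Fin n → F, g ∣ wordPoly a ∧
        ∃ b : Fin n → F, (∀ j, (b j) ^ q = b j) ∧ v = a + b :=
  stmt3_general q r n hq hr hn F hF g hdvd
end

section
/- Let a group G act on a set Ω, let H be a subgroup of G, and let B be a nonempty subset of Ω. Then B is a block for the action (i.e., for every g ∈ G either gB = B or gB ∩ B = ∅) whose setwise stabilizer {g ∈ G : gB = B} equals H if and only if: B is a union of H-orbits, no two of which lie in the same G-orbit, and for every b ∈ B the point stabilizer G_b = {g ∈ G : gb = b} is contained in H. -/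
open scoped Pointwise
/-- `B` is a block for the action of `G` on `Ω` with setwise stabilizer `H`
if and only if `B` is a union of `H`-orbits, no two of which lie in the same `G`-orbit,
and every point stabilizer `G_b`, `b ∈ B`, is contained in `H`. -/
theorem stmt8 {G : Type*} [Group G] {Ω : Type*} [MulAction G Ω]
    (H : Subgroup G) (B : Set Ω) (hB : B.Nonempty) :
    ((∀ g : G, g • B = B ∨ (g • B) ∩ B = ∅) ∧ (∀ g : G, g • B = B ↔ g ∈ H)) ↔
      ((∀ b ∈ B, MulAction.orbit H b ⊆ B) ∧
        (∀ b ∈ B, ∀ b' ∈ B, b' ∈ MulAction.orbit G b → b' ∈ MulAction.orbit H b) ∧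
        (∀ b ∈ B, MulAction.stabilizer G b ≤ H)) := by
  constructor
  · rintro ⟨hblock, hstab⟩
    refine ⟨?_, ?_, ?_⟩
    · rintro b hb x ⟨h, rfl⟩
      have : (h : G) • B = B := (hstab h).mpr h.2
      rw [← this]
      exact ⟨b, hb, rfl⟩
    · rintro b hb b' hb' ⟨g, rfl⟩
      have hne : (g • B) ∩ B ≠ ∅ := by
        intro he
        have : g • b ∈ (g • B) ∩ B := ⟨⟨b, hb, rfl⟩, hb'⟩
        rw [he] at this
        exact this
      have hg : g ∈ H := (hstab g).mp ((hblock g).resolve_right hne)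
      exact ⟨⟨g, hg⟩, rfl⟩
    · intro b hb g hg
      have hgb : g • b = b := hg
      have hne : (g • B) ∩ B ≠ ∅ := by
        intro he
        have : g • b ∈ (g • B) ∩ B := ⟨⟨b, hb, rfl⟩, by rw [hgb]; exact hb⟩
        rw [he] at this
        exact this
      exact (hstab g).mp ((hblock g).resolve_right hne)
  · rintro ⟨horb, hsame, hst⟩
    have key : ∀ g : G, ∀ b ∈ B, g • b ∈ B → g ∈ H := by
      intro g b hb hgb
      obtain ⟨h, hh⟩ := hsame b hb (g • b) hgb ⟨g, rfl⟩
      have : (h : G)⁻¹ * g ∈ MulAction.stabilizer G b := by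
        rw [MulAction.mem_stabilizer_iff, mul_smul, ← hh]
        show (h : G)⁻¹ • (h : G) • b = b
        simp
      have := hst b hb this
      have := H.mul_mem h.2 this
      simpa using this
    have hmem : ∀ g : G, g • B = B ↔ g ∈ H := by
      intro g
      constructor
      · intro hgB
        obtain ⟨b, hb⟩ := hB
        have : g • b ∈ B := by rw [← hgB]; exact ⟨b, hb, rfl⟩
        exact key g b hb this
      · intro hg
        apply le_antisymm
        · rintro x ⟨b, hb, rfl⟩
          exact horb b hb ⟨⟨g, hg⟩, rfl⟩
        · intro b hb
          refine ⟨g⁻¹ • b, horb b hb ⟨⟨g⁻¹, H.inv_mem hg⟩, rfl⟩, by simp⟩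
    refine ⟨fun g => ?_, hmem⟩
    by_cases hne : (g • B) ∩ B = ∅
    · exact Or.inr hne
    · left
      obtain ⟨x, ⟨b, hb, rfl⟩, hx⟩ := Set.nonempty_iff_ne_empty.mpr hne
      exact (hmem g).mpr (key g b hb hx)
end

section
/- Let K be a field and h(x) ∈ K[x]. Suppose that among the coefficients of h corresponding to the powers x^j with j < n, at least k of them are equal to a common nonzero value. Then the polynomial h(x)(x^n − 1) has at least k nonzero coefficients in degrees ≥ n. -/
/-!
Write `g = h (x^n - 1)`, so that `g_{m+n} = h_m - h_{m+n}`. If `h_j ≠ 0` and `g` vanished at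
every degree `j + n, j + 2n, …`, then `h` would be constant, equal to `h_j`, along the progression
`j, j + n, j + 2n, …`, which is impossible for a polynomial. So every residue class mod `n` that
contains a degree `j < n` with `h_j = c` also contains a degree `≥ n` of the support of `g`, and
reducing that part of the support mod `n` gives at least `k` distinct residues.
-/

open Polynomial

namespace Polynomial

variable {R : Type*} [Ring R]

theorem coeff_mul_X_pow_sub_one_add (h : R[X]) (n m : ℕ) :
    (h * (X ^ n - 1)).coeff (m + n) = h.coeff m - h.coeff (m + n) := by
  rw [mul_sub, mul_one, coeff_sub, coeff_mul_X_pow]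

theorem coeff_add_mul_eq_of_coeff_mul_X_pow_sub_one_eq_zero (h : R[X]) (n j : ℕ)
    (hzero : ∀ t, (h * (X ^ n - 1)).coeff (j + n * t + n) = 0) (t : ℕ) :
    h.coeff (j + n * t) = h.coeff j := by
  induction t with
  | zero => simp
  | succ t ih =>
    have hstep := hzero t
    rw [coeff_mul_X_pow_sub_one_add, sub_eq_zero] at hstep
    rw [mul_add_one, ← add_assoc, ← hstep, ih]

theorem exists_coeff_mul_X_pow_sub_one_ne_zero (h : R[X]) {n j : ℕ} (hn : 0 < n)
    (hj : h.coeff j ≠ 0) :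
    ∃ m, n ≤ m ∧ m % n = j % n ∧ (h * (X ^ n - 1)).coeff m ≠ 0 := by
  by_contra! hcon
  have hzero (t : ℕ) : (h * (X ^ n - 1)).coeff (j + n * t + n) = 0 :=
    hcon _ (Nat.le_add_left n _) (by simp [Nat.add_mod_right, Nat.add_mul_mod_self_left])
  have hlarge : h.natDegree < j + n * (h.natDegree + 1) := by nlinarith
  apply hj
  rw [← coeff_add_mul_eq_of_coeff_mul_X_pow_sub_one_eq_zero h n j hzero (h.natDegree + 1)]
  exact coeff_eq_zero_of_natDegree_lt hlarge

end Polynomial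

theorem stmt13_general {K : Type*} [Field K] [DecidableEq K] (h : Polynomial K) (n k : ℕ)
    (hn : 0 < n) (c : K) (hc : c ≠ 0)
    (hcount : k ≤ ((Finset.range n).filter (fun j => h.coeff j = c)).card) :
    k ≤ ((h * (Polynomial.X ^ n - 1)).support.filter (fun j => n ≤ j)).card := by
  set high := (h * (X ^ n - 1)).support.filter (fun j => n ≤ j)
  have hsub : (Finset.range n).filter (fun j => h.coeff j = c) ⊆ high.image (· % n) := by
    intro j hj
    rw [Finset.mem_filter, Finset.mem_range] at hj
    obtain ⟨m, hnm, hmod, hm⟩ :=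
      exists_coeff_mul_X_pow_sub_one_ne_zero h hn (hj.2 ▸ hc : h.coeff j ≠ 0)
    rw [Nat.mod_eq_of_lt hj.1] at hmod
    exact Finset.mem_image.2 ⟨m, Finset.mem_filter.2 ⟨mem_support_iff.2 hm, hnm⟩, hmod⟩
  calc k ≤ _ := hcount
    _ ≤ (high.image (· % n)).card := Finset.card_le_card hsub
    _ ≤ high.card := Finset.card_image_le

/-- if among the coefficients of `h ∈ K[x]` of the powers `x^j`, `j < n`,
at least `k` are equal to a common nonzero value `c`, then `h(x)(x^n − 1)` has at least `k`
nonzero coefficients in degrees `≥ n`. -/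
theorem stmt13 {K : Type*} [Field K] [DecidableEq K] (h : Polynomial K) (n k : ℕ)
    (hn : 0 < n) (hk : 0 < k) (c : K) (hc : c ≠ 0)
    (hcount : k ≤ ((Finset.range n).filter (fun j => h.coeff j = c)).card) :
    k ≤ ((h * (Polynomial.X ^ n - 1)).support.filter (fun j => n ≤ j)).card :=
  stmt13_general h n k hn c hc hcount
end

section
/- Let C ⊆ (F_{q^r})^n be a complete Galois supplemented cyclic code and let u = (x_1, …, x_n) ∈ C be a word of odd type, i.e., x_1 + ⋯ + x_n ≠ 0. Then wt(u) ≥ n^{1/r}, i.e., wt(u)^r ≥ n, where wt(u) is the Hamming weight of u. -/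
/-!
Let `f` be the polynomial of `u` and `σ` the Frobenius `x ↦ x ^ q`. Since `g ∣ f`, the product
`P = ∏_{i<r} f^{σ^i}` is divisible by `∏_{i<r} g^{σ^i} = 1 + x + ⋯ + x^(n-1) =: h`, and
`P(1) = ∏_{i<r} σ^i (f(1)) ≠ 0`. Writing `P = h Q` and `Q = Q(1) + (x - 1) S` gives
`P ≡ Q(1) h (mod x^n - 1)` with `Q(1) ≠ 0`, so the reduction of `P` modulo `x^n - 1` has `n` nonzero
coefficients. That reduction only folds exponents modulo `n`, so `P` has at least `n` monomials,
while as a product of `r` polynomials with `wt(u)` monomials each it has at most `wt(u)^r`.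
-/

open Polynomial

/-- Coefficientwise application of `x ↦ x^(q^i)` (the `i`-th power of the Frobenius
`σ : x ↦ x^q`) to a polynomial. -/
noncomputable def polyGal {F : Type*} [Field F] (q i : ℕ) (g : Polynomial F) : Polynomial F :=
  ∑ j ∈ g.support, Polynomial.C ((g.coeff j) ^ (q ^ i)) * Polynomial.X ^ j

/-- The Hamming weight of a word: the number of nonzero coordinates. -/
noncomputable def hammingWt {F : Type*} [Field F] {n : ℕ} (u : Fin n → F) : ℕ :=
  Set.ncard {j : Fin n | u j ≠ 0}

open Finset

namespace Polynomial

theorem card_support_prod_le {R ι : Type*} [CommSemiring R] (s : Finset ι) (f : ι → R[X]) :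
    (∏ i ∈ s, f i).support.card ≤ ∏ i ∈ s, (f i).support.card := by
  classical
  induction s using Finset.induction_on with
  | empty => exact card_support_le_one_iff_monomial.mpr ⟨0, 1, by simp⟩
  | insert a s ha ih =>
    rw [prod_insert ha, prod_insert ha]
    exact card_support_mul_le.trans (Nat.mul_le_mul_left _ ih)

theorem coeff_C_mul_geom_sum {R : Type*} [Semiring R] (c : R) (n m : ℕ) :
    (C c * ∑ j ∈ range n, X ^ j).coeff m = if m < n then c else 0 := by
  simp [Finset.mul_sum, finsetSum_coeff]

variable {R : Type*} [CommRing R]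

theorem monic_X_pow_sub_one {n : ℕ} (hn : n ≠ 0) : (X ^ n - 1 : R[X]).Monic :=
  leadingCoeff_X_pow_sub_one (Nat.pos_of_ne_zero hn)

variable [Nontrivial R]

theorem degree_X_pow_sub_one {n : ℕ} (hn : n ≠ 0) : (X ^ n - 1 : R[X]).degree = n := by
  simpa using degree_X_pow_sub_C (Nat.pos_of_ne_zero hn) (1 : R)

theorem monomial_modByMonic_X_pow_sub_one {n : ℕ} (hn : n ≠ 0) (k : ℕ) (c : R) :
    monomial k c %ₘ (X ^ n - 1) = monomial (k % n) c := by
  have hdvd : X ^ n - 1 ∣ monomial k c - monomial (k % n) c := by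
    obtain ⟨d, hd⟩ : X ^ n - 1 ∣ (X : R[X]) ^ (n * (k / n)) - 1 :=
      pow_one_sub_dvd_pow_mul_sub_one X n (k / n)
    refine ⟨C c * X ^ (k % n) * d, ?_⟩
    rw [← C_mul_X_pow_eq_monomial, ← C_mul_X_pow_eq_monomial]
    nth_rw 1 [← Nat.mod_add_div k n]
    rw [pow_add]
    linear_combination C c * X ^ (k % n) * hd
  rw [modByMonic_eq_of_dvd_sub (monic_X_pow_sub_one hn) hdvd,
    (modByMonic_eq_self_iff (monic_X_pow_sub_one hn)).mpr]
  calc degree (monomial (k % n) c) ≤ (k % n : ℕ) := degree_monomial_le _ _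
    _ < n := by exact_mod_cast Nat.mod_lt k (Nat.pos_of_ne_zero hn)
    _ = degree (X ^ n - 1 : R[X]) := (degree_X_pow_sub_one hn).symm

theorem support_modByMonic_X_pow_sub_one_subset {n : ℕ} (hn : n ≠ 0) (p : R[X]) :
    (p %ₘ (X ^ n - 1)).support ⊆ p.support.image (· % n) := by
  intro m hm
  rw [← modByMonicHom_apply, p.as_sum_support, map_sum] at hm
  simp only [modByMonicHom_apply, monomial_modByMonic_X_pow_sub_one hn, mem_support_iff,
    finsetSum_coeff, coeff_monomial] at hm
  obtain ⟨k, hk, hkm⟩ := exists_ne_zero_of_sum_ne_zero hm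
  exact mem_image.mpr ⟨k, hk, by_contra fun h => hkm (if_neg h)⟩

theorem card_support_modByMonic_X_pow_sub_one_le (n : ℕ) (p : R[X]) :
    (p %ₘ (X ^ n - 1)).support.card ≤ p.support.card := by
  rcases eq_or_ne n 0 with rfl | hn
  · simp
  · exact (card_le_card (support_modByMonic_X_pow_sub_one_subset hn p)).trans card_image_le

theorem le_card_support_of_geom_sum_dvd {n : ℕ} {p : R[X]}
    (hdvd : ∑ j ∈ range n, X ^ j ∣ p) (hp : p.eval 1 ≠ 0) : n ≤ p.support.card := by
  obtain ⟨q, rfl⟩ := hdvd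
  rcases eq_or_ne n 0 with rfl | hn
  · exact Nat.zero_le _
  have hc : q.eval 1 ≠ 0 := right_ne_zero_of_mul (by rwa [← eval_mul])
  set c := q.eval 1
  have hmod : ((∑ j ∈ range n, X ^ j) * q) %ₘ (X ^ n - 1) = C c * ∑ j ∈ range n, X ^ j := by
    have hdvd : X ^ n - 1 ∣ (∑ j ∈ range n, X ^ j) * q - C c * ∑ j ∈ range n, X ^ j := by
      obtain ⟨s, hs⟩ := X_sub_C_dvd_sub_C_eval (a := (1 : R)) (p := q)
      refine ⟨s, ?_⟩
      rw [← geom_sum_mul, mul_assoc, ← C_1, ← hs]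
      ring
    rw [modByMonic_eq_of_dvd_sub (monic_X_pow_sub_one hn) hdvd,
      (modByMonic_eq_self_iff (monic_X_pow_sub_one hn)).mpr]
    rw [degree_X_pow_sub_one hn, degree_lt_iff_coeff_zero]
    intro m hm
    rw [coeff_C_mul_geom_sum, if_neg (not_lt.mpr hm)]
  have hsupp : range n ⊆ (C c * ∑ j ∈ range n, X ^ j).support := fun m hm => by
    rw [mem_support_iff, coeff_C_mul_geom_sum, if_pos (mem_range.mp hm)]
    exact hc
  calc n = (range n).card := (card_range n).symm
    _ ≤ (C c * ∑ j ∈ range n, X ^ j).support.card := card_le_card hsupp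
    _ ≤ _ := hmod ▸ card_support_modByMonic_X_pow_sub_one_le n _

end Polynomial

theorem le_card_support_pow_of_prod_map_eq_geom_sum {F : Type*} [Field F] {n r : ℕ}
    (σ : ℕ → F →+* F) {g f : F[X]}
    (hprod : ∏ i ∈ range r, g.map (σ i) = ∑ j ∈ range n, X ^ j) (hg : g ∣ f)
    (hf : f.eval 1 ≠ 0) : n ≤ f.support.card ^ r := by
  have hdvd : ∑ j ∈ range n, X ^ j ∣ ∏ i ∈ range r, f.map (σ i) :=
    hprod ▸ prod_dvd_prod_of_dvd _ _ fun i _ => map_dvd (σ i) hg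
  have heval : (∏ i ∈ range r, f.map (σ i)).eval 1 ≠ 0 := by
    simp only [eval_prod, eval_map, eval₂_at_one]
    exact prod_ne_zero_iff.mpr fun i _ => (map_ne_zero (σ i)).mpr hf
  calc n ≤ (∏ i ∈ range r, f.map (σ i)).support.card := le_card_support_of_geom_sum_dvd hdvd heval
    _ ≤ ∏ i ∈ range r, (f.map (σ i)).support.card := card_support_prod_le _ _
    _ = f.support.card ^ r := by simp [support_map_of_injective _ (σ _).injective]

section Frobenius

variable {F : Type*} [Field F]

theorem polyGal_eq_map {q i : ℕ} {φ : F →+* F} (hφ : ∀ x, φ x = x ^ q ^ i) (g : F[X]) :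
    polyGal q i g = g.map φ := by
  ext m
  simp only [polyGal, finsetSum_coeff, coeff_C_mul_X_pow, coeff_map, sum_ite_eq]
  split_ifs with h
  · exact (hφ _).symm
  · rw [notMem_support_iff.mp h, map_zero]

theorem exists_ringHom_eq_pow_pow [Fintype F] {q r : ℕ} (hq : IsPrimePow q)
    (hF : Fintype.card F = q ^ r) (i : ℕ) : ∃ φ : F →+* F, ∀ x, φ x = x ^ q ^ i := by
  obtain ⟨p, k, hp, -, rfl⟩ := hq
  obtain ⟨p', hchar, m, hp', hcard⟩ := FiniteField.card' F
  obtain rfl : p' = p := by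
    have : p' ∣ p ^ (k * r) := by rw [pow_mul, ← hF, hcard]; exact dvd_pow_self p' m.ne_zero
    exact (Nat.prime_dvd_prime_iff_eq hp' hp.nat_prime).mp (hp'.dvd_of_dvd_pow this)
  have : ExpChar F p' := ExpChar.prime hp'
  exact ⟨iterateFrobenius F p' (k * i), fun x => by rw [iterateFrobenius_def, pow_mul]⟩

end Frobenius

section Words

variable {F : Type*} [Field F] {n : ℕ}

theorem eval_one_wordPoly (u : Fin n → F) : (wordPoly u).eval 1 = ∑ j, u j := by
  simp [wordPoly, eval_finsetSum]

theorem support_wordPoly [DecidableEq F] (u : Fin n → F) :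
    (wordPoly u).support = (univ.filter fun j => u j ≠ 0).map Fin.valEmbedding := by
  ext m
  simp only [wordPoly, mem_support_iff, finsetSum_coeff, coeff_C_mul_X_pow, mem_map,
    mem_filter, mem_univ, true_and, Fin.valEmbedding_apply]
  constructor
  · intro h
    obtain ⟨j, -, hj⟩ := exists_ne_zero_of_sum_ne_zero h
    by_cases hmj : m = j
    · exact ⟨j, by simpa [hmj] using hj, hmj.symm⟩
    · simp [hmj] at hj
  · rintro ⟨j, hj, rfl⟩
    simpa [Fin.val_inj] using hj

theorem card_support_wordPoly (u : Fin n → F) : (wordPoly u).support.card = hammingWt u := by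
  classical
  rw [support_wordPoly, card_map, hammingWt, ← Set.ncard_coe_finset, coe_filter]
  simp

end Words

theorem stmt14_general (q r n : ℕ) (hq : IsPrimePow q)
    (F : Type*) [Field F] [Fintype F] (hF : Fintype.card F = q ^ r)
    (g : Polynomial F)
    (hcomplete : ∏ i ∈ Finset.range r, polyGal q i g =
      ∑ j ∈ Finset.range n, Polynomial.X ^ j)
    (u : Fin n → F) (hu : g ∣ wordPoly u) (hodd : (∑ j, u j) ≠ 0) :
    n ≤ (hammingWt u) ^ r := by
  choose σ hσ using exists_ringHom_eq_pow_pow hq hF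
  simp only [polyGal_eq_map (hσ _)] at hcomplete
  rw [← card_support_wordPoly]
  exact le_card_support_pow_of_prod_map_eq_geom_sum σ hcomplete hu (by rwa [eval_one_wordPoly])

/-- if `C ⊆ (F_{q^r})^n` is a complete Galois supplemented cyclic code (i.e.
its generator `g` is Galois coprime and `∏_τ g^τ = 1 + x + ⋯ + x^(n−1)`) and `u ∈ C` has odd
type (the sum of its coordinates is nonzero), then `wt(u) ≥ n^(1/r)`, i.e. `wt(u)^r ≥ n`. -/
theorem stmt14 (q r n : ℕ) (hq : IsPrimePow q) (hr : 1 < r) (hn : 0 < n)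
    (hcop : Nat.Coprime n q)
    (F : Type*) [Field F] [Fintype F] (hF : Fintype.card F = q ^ r)
    (g : Polynomial F) (hmonic : g.Monic) (hdvd : g ∣ (Polynomial.X ^ n - 1))
    (hGC : ∀ i : ℕ, 0 < i → i < r → IsCoprime g (polyGal q i g))
    (hcomplete : ∏ i ∈ Finset.range r, polyGal q i g =
      ∑ j ∈ Finset.range n, Polynomial.X ^ j)
    (u : Fin n → F) (hu : g ∣ wordPoly u) (hodd : (∑ j, u j) ≠ 0) :
    n ≤ (hammingWt u) ^ r :=
  stmt14_general q r n hq F hF g hcomplete u hu hodd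
end
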